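/- A protocol p = #u₁#op₁#u₂#op₂…#u_t#op_t is a correct protocol (i.e., consistent with executing the set operations starting from the empty set) if and only if every query block #u_i#test+ is supported and every query block #u_i#test- is either supported or standalone. -/
import Mathlib


/-- Operations with the set in a protocol. -/
inductive SAOp : Type
  | ins   -- `in`
  | del   -- `out`
  | testp -- `test+`
  | testm -- `test-`
deriving DecidableEq

/-- The sequence of set contents determined by a protocol `(u_i, op_i)`:
`S₀ = ∅`; `in` adds the query word, `out` removes it, tests leave the set
unchanged.  `setContents u op i` is the set content after the first `i`
operations. -/
def setContents {Γ : Type} (u : ℕ → List Γ) (op : ℕ → SAOp) : ℕ → Set (List Γ)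
  | 0 => ∅
  | i + 1 =>
    match op i with
    | SAOp.ins => setContents u op i ∪ {u i}
    | SAOp.del => setContents u op i \ {u i}
    | _ => setContents u op i

/-- A protocol of length `t` is correct if each `test+` query word is in the
current set content and each `test-` query word is not. -/
def CorrectProtocol {Γ : Type} (u : ℕ → List Γ) (op : ℕ → SAOp) (t : ℕ) : Prop :=
  ∀ i < t, (op i = SAOp.testp → u i ∈ setContents u op i) ∧
           (op i = SAOp.testm → u i ∉ setContents u op i)

/-- Block `i` supports block `j`: same query word, `in`/`test+` or `out`/`test-`,
and no intermediate `in`/`out` block with the same query word. -/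
def Supports {Γ : Type} (u : ℕ → List Γ) (op : ℕ → SAOp) (i j : ℕ) : Prop :=
  i < j ∧ u i = u j ∧
  ((op i = SAOp.ins ∧ op j = SAOp.testp) ∨ (op i = SAOp.del ∧ op j = SAOp.testm)) ∧
  ∀ k, i < k → k < j → u k = u i → op k ≠ SAOp.ins ∧ op k ≠ SAOp.del

/-- Block `j` (with operation `out` or `test-`) is standalone: it has no support
and no earlier `in`-block has the same query word. -/
def Standalone {Γ : Type} (u : ℕ → List Γ) (op : ℕ → SAOp) (j : ℕ) : Prop :=
  (op j = SAOp.del ∨ op j = SAOp.testm) ∧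
  (¬ ∃ i, Supports u op i j) ∧
  ∀ k < j, ¬ (u k = u j ∧ op k = SAOp.ins)

lemma mem_setContents_iff {Γ : Type} (u : ℕ → List Γ) (op : ℕ → SAOp) (w : List Γ) :
    ∀ j, w ∈ setContents u op j ↔
      ∃ i, i < j ∧ u i = w ∧ op i = SAOp.ins ∧
        ∀ k, i < k → k < j → u k = w → op k ≠ SAOp.ins ∧ op k ≠ SAOp.del := by
  intro j
  induction j with
  | zero => simp [setContents]
  | succ j ih =>
    have step : (∃ i, i < j ∧ u i = w ∧ op i = SAOp.ins ∧
        ∀ k, i < k → k < j → u k = w → op k ≠ SAOp.ins ∧ op k ≠ SAOp.del) →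
        (¬ (u j = w ∧ (op j = SAOp.ins ∨ op j = SAOp.del))) →
        ∃ i, i < j + 1 ∧ u i = w ∧ op i = SAOp.ins ∧
        ∀ k, i < k → k < j + 1 → u k = w → op k ≠ SAOp.ins ∧ op k ≠ SAOp.del := by
      rintro ⟨i, hi, hu, hins, hno⟩ hj
      refine ⟨i, Nat.lt_succ_of_lt hi, hu, hins, fun k h1 h2 hk => ?_⟩
      rcases Nat.lt_succ_iff_lt_or_eq.1 h2 with h | h
      · exact hno k h1 h hk
      · subst h
        constructor <;> intro hc <;> exact hj ⟨hk, by simp [hc]⟩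
    have back : (∃ i, i < j + 1 ∧ u i = w ∧ op i = SAOp.ins ∧
        ∀ k, i < k → k < j + 1 → u k = w → op k ≠ SAOp.ins ∧ op k ≠ SAOp.del) →
        (¬ (u j = w ∧ op j = SAOp.ins)) →
        ∃ i, i < j ∧ u i = w ∧ op i = SAOp.ins ∧
        ∀ k, i < k → k < j → u k = w → op k ≠ SAOp.ins ∧ op k ≠ SAOp.del := by
      rintro ⟨i, hi, hu, hins, hno⟩ hj
      have hij : i < j := by
        rcases Nat.lt_succ_iff_lt_or_eq.1 hi with h | h
        · exact h
        · exact absurd ⟨h ▸ hu, h ▸ hins⟩ hj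
      exact ⟨i, hij, hu, hins, fun k h1 h2 hk => hno k h1 (Nat.lt_succ_of_lt h2) hk⟩
    show w ∈ (match op j with
      | SAOp.ins => setContents u op j ∪ {u j}
      | SAOp.del => setContents u op j \ {u j}
      | _ => setContents u op j) ↔ _
    cases hop : op j with
    | ins =>
      simp only [Set.mem_union, Set.mem_singleton_iff]
      constructor
      · rintro (h | h)
        · by_cases hw : u j = w
          · exact ⟨j, Nat.lt_succ_self j, hw, hop,
              fun k h1 h2 _ => absurd h2 (Nat.not_lt.2 h1)⟩
          · exact step (ih.1 h) (fun hc => hw hc.1)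
        · exact ⟨j, Nat.lt_succ_self j, h.symm, hop,
            fun k h1 h2 _ => absurd h2 (Nat.not_lt.2 h1)⟩
      · intro h
        by_cases hw : u j = w
        · right; exact hw.symm
        · left
          exact ih.2 (back h (fun hc => hw hc.1))
    | del =>
      simp only [Set.mem_diff, Set.mem_singleton_iff]
      constructor
      · rintro ⟨h, hw⟩
        exact step (ih.1 h) (fun hc => hw hc.1.symm)
      · rintro ⟨i, hi, hu, hins, hno⟩
        have hw : w ≠ u j := by
          intro hc
          have hij : i < j := by
            rcases Nat.lt_succ_iff_lt_or_eq.1 hi with h | h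
            · exact h
            · rw [h, hop] at hins; exact absurd hins (by simp)
          exact (hno j hij (Nat.lt_succ_self j) hc.symm).2 hop
        refine ⟨ih.2 (back ⟨i, hi, hu, hins, hno⟩ (fun hc => hw hc.1.symm)), hw⟩
    | testp =>
      rw [ih]
      constructor
      · exact fun h => step h (fun hc => by rcases hc.2 with h' | h' <;> rw [hop] at h' <;> simp at h')
      · exact fun h => back h (fun hc => by rw [hop] at hc; simp at hc)
    | testm =>
      rw [ih]
      constructor
      · exact fun h => step h (fun hc => by rcases hc.2 with h' | h' <;> rw [hop] at h' <;> simp at h')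
      · exact fun h => back h (fun hc => by rw [hop] at hc; simp at hc)

/-- a protocol is correct iff every `test+` block is supported and
every `test-` block is either supported or standalone. -/
theorem correct_iff_supported_or_standalone {Γ : Type}
    (u : ℕ → List Γ) (op : ℕ → SAOp) (t : ℕ) :
    CorrectProtocol u op t ↔
      ((∀ j < t, op j = SAOp.testp → ∃ i, Supports u op i j) ∧
       (∀ j < t, op j = SAOp.testm → (∃ i, Supports u op i j) ∨ Standalone u op j)) := by
  classical
  constructor
  · intro hcorr
    constructor
    · intro j hj hop
      have h := (hcorr j hj).1 hop
      rw [mem_setContents_iff] at h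
      obtain ⟨i, hi, hu, hins, hno⟩ := h
      exact ⟨i, hi, hu, Or.inl ⟨hins, hop⟩,
        fun k h1 h2 hk => hno k h1 h2 (hk.trans hu)⟩
    · intro j hj hop
      have hnm := (hcorr j hj).2 hop
      rw [mem_setContents_iff] at hnm
      set Q : ℕ → Prop := fun k => u k = u j ∧ (op k = SAOp.ins ∨ op k = SAOp.del) with hQ
      by_cases hex : ∃ k, k < j ∧ Q k
      · left
        obtain ⟨k₀, hk₀, hQk₀⟩ := hex
        set N := Nat.findGreatest Q j with hN
        have hQN : Q N := Nat.findGreatest_spec (Nat.le_of_lt hk₀) hQk₀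
        have hNj : N ≤ j := Nat.findGreatest_le j
        have hNlt : N < j := lt_of_le_of_ne hNj (fun h => by
          rcases hQN.2 with h' | h' <;> rw [h, hop] at h' <;> simp at h')
        have hmax : ∀ m, N < m → m < j → u m = u j → op m ≠ SAOp.ins ∧ op m ≠ SAOp.del := by
          intro m h1 h2 hm
          have h2' := Nat.findGreatest_is_greatest h1 (Nat.le_of_lt h2)
          simp only [hQ, not_and, not_or] at h2'
          exact h2' hm
        rcases hQN.2 with hins | hdel
        · exact absurd ⟨N, hNlt, hQN.1, hins, fun k h1 h2 hk => hmax k h1 h2 hk⟩ hnm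
        · exact ⟨N, hNlt, hQN.1, Or.inr ⟨hdel, hop⟩,
            fun k h1 h2 hk => hmax k h1 h2 (hk.trans hQN.1)⟩
      · right
        refine ⟨Or.inr hop, ?_, ?_⟩
        · rintro ⟨i, hij, hu, hops, -⟩
          exact hex ⟨i, hij, hu, by rcases hops with ⟨h, -⟩ | ⟨h, -⟩ <;> [exact Or.inl h; exact Or.inr h]⟩
        · intro k hk ⟨hu, hins⟩
          exact hex ⟨k, hk, hu, Or.inl hins⟩
  · rintro ⟨hp, hm⟩ j hj
    constructor
    · intro hop
      obtain ⟨i, hij, hu, hops, hno⟩ := hp j hj hop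
      rcases hops with ⟨hins, -⟩ | ⟨-, hc⟩
      · rw [mem_setContents_iff]
        exact ⟨i, hij, hu, hins, fun k h1 h2 hk => hno k h1 h2 (hk.trans hu.symm)⟩
      · rw [hop] at hc; simp at hc
    · intro hop
      rw [mem_setContents_iff]
      rintro ⟨i', hi', hu', hins', hno'⟩
      rcases hm j hj hop with ⟨i, hij, hu, hops, hno⟩ | hst
      · rcases hops with ⟨-, hc⟩ | ⟨hdel, -⟩
        · rw [hop] at hc; simp at hc
        · rcases lt_trichotomy i i' with h | h | h
          · exact (hno i' h hi' (hu'.trans hu.symm)).1 hins'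
          · rw [h, hins'] at hdel; simp at hdel
          · exact (hno' i h hij hu).2 hdel
      · exact hst.2.2 i' hi' ⟨hu', hins'⟩
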